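/- Let T > 0, let v, ω : [0, T] → ℝ be continuous, and let z : [0, T] × [−1, 1] → ℝ⁴ be continuous, with continuous partial derivative ∂z/∂t, satisfying the parameterized bilinear ensemble dynamics ∂z/∂t(t, β) = β · (v(t) · B₁ + ω(t) · B₂) · z(t, β) for all t ∈ [0, T] and β ∈ [−1, 1]. For each natural number k define the k-th moment m_k(t) = ∫_{−1}^{1} φ_k(β) · z(t, β) dμ(β) ∈ ℝ⁴, with the convention m_{−1} = 0. Then for every k, m_k is differentiable on (0, T) and satisfies the moment dynamics d/dt m_k(t) = (v(t) · B₁ + ω(t) · B₂) · (a_k · m_{k+1}(t) + c_k · m_{k−1}(t)). -/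

import Mathlib

open Real Matrix MeasureTheory

/-! Differentiating under the integral sign (the `t`-derivative of the integrand is continuous on
a compact rectangle) gives `m_k' = A(t) ∫ β φ_k(β) z(t, β) dμ` with `A = v B₁ + ω B₂`, and the
three-term recurrence `β φ_k = a_k φ_{k+1} + c_k φ_{k-1}` splits this integral into
`a_k m_{k+1} + c_k m_{k-1}`.

The recurrence is Bonnet's `(n + 1) P_{n+1} = (2n + 1) x P_n - n P_{n-1}`, rescaled. For
`R_n = Dⁿ (X² - 1)ⁿ = 2ⁿ n! P_n` it reads `R_{n+2} = (4n + 6) X R_{n+1} - 4 (n + 1)² R_n`, and it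
follows from `R_{n+1} = 2(n + 1) X R_n + 2 (X² - 1) R_n'` and the Legendre equation
`((X² - 1) R_n')' = n(n + 1) R_n`. Both come from computing `D^{n+2} (X² - 1)^{n+2}` in two ways:
as `D^{n+1}` of `2(n + 2) X (X² - 1)^{n+1}`, and by Leibniz's rule applied to
`(X² - 1) · (X² - 1)^{n+1}`. -/

/-- The Legendre polynomial `P_n`, defined via Rodrigues' formula:
`P_n(x) = 1/(2^n · n!) · dⁿ/dxⁿ (x² − 1)ⁿ`. -/
noncomputable def legendre (n : ℕ) (x : ℝ) : ℝ :=
  (1 / (2 ^ n * n.factorial : ℝ)) * iteratedDeriv n (fun y : ℝ => (y ^ 2 - 1) ^ n) x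

/-- The normalized Legendre polynomial `φ_k(x) = √(2k + 1) · P_k(x)`. -/
noncomputable def normLegendre (k : ℕ) (x : ℝ) : ℝ :=
  Real.sqrt (2 * (k : ℝ) + 1) * legendre k x

/-- The uniform probability measure on `[−1, 1]`, i.e. `dμ = dx/2`. -/
noncomputable def unifMeasure : Measure ℝ :=
  (2 : ENNReal)⁻¹ • (volume.restrict (Set.Icc (-1 : ℝ) 1))

/-- The coefficient `a_k = (k + 1)/√(4(k + 1)² − 1)` for `k ≥ 0`. -/
noncomputable def aCoef (k : ℕ) : ℝ :=
  ((k : ℝ) + 1) / Real.sqrt (4 * ((k : ℝ) + 1) ^ 2 - 1)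

/-- The coefficient `c_k = k/√(4k² − 1)` for `k ≥ 1`, with `c_0 = 0`. -/
noncomputable def cCoef (k : ℕ) : ℝ :=
  if k = 0 then 0 else (k : ℝ) / Real.sqrt (4 * (k : ℝ) ^ 2 - 1)

/-- `B₁ = [[0, Λ], [0, 0]]` in 2×2 block form, where `Λ = [[0, 1], [1, 0]]`. -/
def B1 : Matrix (Fin 4) (Fin 4) ℝ :=
  !![0, 0, 0, 1;
     0, 0, 1, 0;
     0, 0, 0, 0;
     0, 0, 0, 0]

/-- `B₂ = [[0, 0], [0, J]]` in 2×2 block form, where `J = [[0, −1], [1, 0]]`. -/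
def B2 : Matrix (Fin 4) (Fin 4) ℝ :=
  !![0, 0, 0, 0;
     0, 0, 0, 0;
     0, 0, 0, -1;
     0, 0, 1, 0]

/-- The `k`-th moment `m_k(t) = ∫_{−1}^{1} φ_k(β) · z(t, β) dμ(β) ∈ ℝ⁴` of the ensemble
state, indexed by `ℤ` with the convention `m_k = 0` for `k < 0` (so `m_{−1} = 0`). -/
noncomputable def moment (z : ℝ → ℝ → Fin 4 → ℝ) (k : ℤ) (t : ℝ) : Fin 4 → ℝ :=
  if k < 0 then 0 else ∫ β, normLegendre k.toNat β • z t β ∂unifMeasure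

namespace Polynomial

variable {R : Type*} [CommRing R]

theorem iterate_derivative_X_mul_succ (k : ℕ) (p : R[X]) :
    derivative^[k + 1] (X * p) =
      X * derivative^[k + 1] p + ((k : R[X]) + 1) * derivative^[k] p := by
  rw [mul_comm, iterate_derivative_mul_X, Nat.add_sub_cancel, nsmul_eq_mul]
  push_cast
  ring

theorem iterate_derivative_X_sq_sub_one_mul (k : ℕ) (p : R[X]) :
    derivative^[k + 2] ((X ^ 2 - 1) * p) =
      (X ^ 2 - 1) * derivative^[k + 2] p + 2 * ((k : R[X]) + 2) * X * derivative^[k + 1] p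
        + ((k : R[X]) + 2) * ((k : R[X]) + 1) * derivative^[k] p := by
  have hX := iterate_derivative_X_mul_succ (k + 1) p
  rw [show (X ^ 2 - 1) * p = X * (X * p) - p by ring, iterate_derivative_sub,
    iterate_derivative_X_mul_succ, hX, iterate_derivative_X_mul_succ]
  push_cast
  ring

theorem derivative_X_sq_sub_one_pow_succ (n : ℕ) :
    derivative ((X ^ 2 - 1 : R[X]) ^ (n + 1)) =
      ((2 * (n + 1) : ℕ) : R[X]) * (X * (X ^ 2 - 1) ^ n) := by
  rw [derivative_pow, derivative_sub, derivative_X_sq, derivative_one, Nat.add_sub_cancel,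
    C_ofNat, C_eq_natCast]
  push_cast
  ring

noncomputable def rodrigues (n : ℕ) : R[X] :=
  derivative^[n] ((X ^ 2 - 1) ^ n)

theorem rodrigues_succ_succ_eq_X_mul (n : ℕ) :
    rodrigues (n + 2) = 2 * ((n : R[X]) + 2) * (X * rodrigues (n + 1)
      + ((n : R[X]) + 1) * derivative^[n] ((X ^ 2 - 1 : R[X]) ^ (n + 1))) := by
  rw [rodrigues, Function.iterate_succ_apply, derivative_X_sq_sub_one_pow_succ,
    iterate_derivative_natCast_mul, iterate_derivative_X_mul_succ, rodrigues]
  push_cast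
  ring

theorem rodrigues_succ_succ_eq_leibniz (n : ℕ) :
    rodrigues (n + 2) = (X ^ 2 - 1) * derivative (rodrigues (n + 1))
      + 2 * ((n : R[X]) + 2) * X * rodrigues (n + 1)
      + ((n : R[X]) + 2) * ((n : R[X]) + 1) * derivative^[n] ((X ^ 2 - 1 : R[X]) ^ (n + 1)) := by
  rw [rodrigues, pow_succ', iterate_derivative_X_sq_sub_one_mul, rodrigues,
    ← Function.iterate_succ_apply' derivative]

theorem rodrigues_zero : rodrigues 0 = (1 : R[X]) := by
  simp [rodrigues]

theorem rodrigues_one : rodrigues 1 = (2 * X : R[X]) := by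
  rw [rodrigues, Function.iterate_one, pow_one, derivative_sub, derivative_X_sq, derivative_one,
    sub_zero, C_ofNat]

theorem X_sq_sub_one_mul_derivative_rodrigues_succ (n : ℕ) :
    (X ^ 2 - 1) * derivative (rodrigues (n + 1) : R[X]) =
      (((n + 1) * (n + 2) : ℕ) : R[X]) * derivative^[n] ((X ^ 2 - 1 : R[X]) ^ (n + 1)) := by
  push_cast
  linear_combination
    rodrigues_succ_succ_eq_X_mul (R := R) n - rodrigues_succ_succ_eq_leibniz (R := R) n

theorem rodrigues_succ (n : ℕ) :
    rodrigues (n + 1) =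
      2 * ((n : R[X]) + 1) * X * rodrigues n + 2 * (X ^ 2 - 1) * derivative (rodrigues n) := by
  cases n with
  | zero => simp [rodrigues_zero, rodrigues_one]
  | succ n =>
    push_cast
    linear_combination
      2 * rodrigues_succ_succ_eq_leibniz (R := R) n - rodrigues_succ_succ_eq_X_mul (R := R) n

theorem derivative_X_sq_sub_one_mul_derivative_rodrigues (n : ℕ) :
    derivative ((X ^ 2 - 1) * derivative (rodrigues n : R[X])) =
      (n : R[X]) * ((n : R[X]) + 1) * rodrigues n := by
  cases n with
  | zero => simp [rodrigues_zero]
  | succ n =>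
    rw [X_sq_sub_one_mul_derivative_rodrigues_succ, derivative_natCast_mul,
      ← Function.iterate_succ_apply' derivative, ← rodrigues]
    push_cast
    ring

theorem rodrigues_succ_succ (n : ℕ) :
    rodrigues (n + 2) = (4 * (n : R[X]) + 6) * X * rodrigues (n + 1)
      - 4 * ((n : R[X]) + 1) ^ 2 * rodrigues n := by
  have h1 := rodrigues_succ (R := R) (n + 1)
  have h2 := rodrigues_succ (R := R) n
  have h3 : derivative (rodrigues (n + 1) : R[X]) = 2 * ((n : R[X]) + 1) * rodrigues n
      + 2 * ((n : R[X]) + 1) * X * derivative (rodrigues n)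
      + 2 * derivative ((X ^ 2 - 1) * derivative (rodrigues n : R[X])) := by
    rw [h2]
    simp only [derivative_add, derivative_mul, derivative_X, derivative_sub, derivative_X_pow,
      derivative_natCast, derivative_ofNat, derivative_one]
    ring
  have h4 := derivative_X_sq_sub_one_mul_derivative_rodrigues (R := R) n
  push_cast at h1
  linear_combination h1 - (2 * n + 2) * X * h2 + 2 * (X ^ 2 - 1) * h3 + 4 * (X ^ 2 - 1) * h4

theorem iteratedDeriv_eval {𝕜 : Type*} [NontriviallyNormedField 𝕜] (k : ℕ)
    (p : 𝕜[X]) : iteratedDeriv k (fun x => p.eval x) = fun x => (derivative^[k] p).eval x := by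
  induction k generalizing p with
  | zero => simp
  | succ k ih =>
    have hderiv : _root_.deriv (fun x => p.eval x) = fun x => (derivative p).eval x := by
      ext x; exact p.deriv
    rw [iteratedDeriv_succ', hderiv, ih, Function.iterate_succ_apply]

end Polynomial

section Legendre

open Polynomial

theorem legendre_eq_eval (n : ℕ) (x : ℝ) :
    legendre n x = (2 ^ n * n.factorial : ℝ)⁻¹ * (rodrigues n : ℝ[X]).eval x := by
  have hpoly : (fun y : ℝ => (y ^ 2 - 1) ^ n) = fun y => ((X ^ 2 - 1 : ℝ[X]) ^ n).eval y := by
    simp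
  rw [legendre, hpoly, iteratedDeriv_eval, one_div, rodrigues]

theorem legendre_zero (x : ℝ) : legendre 0 x = 1 := by
  simp [legendre_eq_eval, rodrigues_zero]

theorem legendre_one (x : ℝ) : legendre 1 x = x := by
  simp [legendre_eq_eval, rodrigues_one]

theorem legendre_succ_succ (n : ℕ) (x : ℝ) :
    (n + 2) * legendre (n + 2) x =
      (2 * n + 3) * x * legendre (n + 1) x - (n + 1) * legendre n x := by
  have hbonnet := congrArg (eval x) (rodrigues_succ_succ (R := ℝ) n)
  simp only [eval_sub, eval_mul, eval_add, eval_pow, eval_natCast, eval_ofNat, eval_one, eval_X]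
    at hbonnet
  simp only [legendre_eq_eval, Nat.factorial_succ, pow_succ]
  push_cast
  field_simp
  linear_combination (n + 2 : ℝ) * hbonnet

theorem continuous_normLegendre (k : ℕ) : Continuous (normLegendre k) := by
  have hP : Continuous (legendre k) := by
    rw [funext (legendre_eq_eval k)]
    fun_prop
  exact continuous_const.mul hP

theorem cCoef_succ (k : ℕ) : cCoef (k + 1) = aCoef k := by
  simp [cCoef, aCoef]

theorem aCoef_eq (k : ℕ) :
    aCoef k = (k + 1) / (√(2 * k + 1) * √(2 * k + 3)) := by
  rw [aCoef, ← Real.sqrt_mul (by positivity)]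
  ring_nf

theorem mul_normLegendre (k : ℕ) (x : ℝ) :
    x * normLegendre k x =
      aCoef k * normLegendre (k + 1) x + cCoef k * normLegendre (k - 1) x := by
  cases k with
  | zero =>
    norm_num [normLegendre, aCoef_eq, cCoef, legendre_zero, legendre_one]
  | succ m =>
    have hrec := legendre_succ_succ m x
    have h3 : √(2 * (m : ℝ) + 3) ^ 2 = 2 * m + 3 := Real.sq_sqrt (by positivity)
    simp only [normLegendre, cCoef_succ, aCoef_eq, Nat.add_sub_cancel]
    push_cast
    rw [show 2 * ((m : ℝ) + 1) + 1 = 2 * m + 3 by ring,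
      show 2 * ((m : ℝ) + 1) + 3 = 2 * m + 5 by ring,
      show 2 * ((m : ℝ) + 1 + 1) + 1 = 2 * m + 5 by ring]
    field_simp
    rw [h3]
    linear_combination -hrec

end Legendre

open Set Function

instance isProbabilityMeasure_unifMeasure : IsProbabilityMeasure unifMeasure where
  measure_univ := by
    rw [unifMeasure, Measure.smul_apply, Measure.restrict_apply_univ, Real.volume_Icc]
    norm_num [ENNReal.inv_mul_cancel]

theorem ae_mem_Icc_unifMeasure : ∀ᵐ β ∂unifMeasure, β ∈ Icc (-1 : ℝ) 1 :=
  Measure.ae_smul_measure (ae_restrict_mem measurableSet_Icc) _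

section ParametricIntegral

variable {α E : Type*} [TopologicalSpace α] [T2Space α] [MeasurableSpace α]
  [OpensMeasurableSpace α] [NormedAddCommGroup E]
  {μ : Measure α} [IsFiniteMeasure μ] {K : Set α}

theorem ContinuousOn.integrable_of_ae_mem {f : α → E} (hK : IsCompact K)
    (hμK : ∀ᵐ β ∂μ, β ∈ K) (hf : ContinuousOn f K) : Integrable f μ := by
  simpa [IntegrableOn, Measure.restrict_eq_self_of_ae_mem hμK] using
    hf.integrableOn_compact (μ := μ) hK

theorem hasDerivAt_integral_of_continuousOn [NormedSpace ℝ E] {F F' : ℝ → α → E} {a b t : ℝ}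
    (hK : IsCompact K) (hμK : ∀ᵐ β ∂μ, β ∈ K) (ht : t ∈ Ioo a b)
    (hF : ∀ s ∈ Icc a b, ContinuousOn (F s) K)
    (hF' : ContinuousOn (uncurry F') (Icc a b ×ˢ K))
    (hderiv : ∀ β ∈ K, ∀ s ∈ Icc a b, HasDerivWithinAt (F · β) (F' s β) (Icc a b) s) :
    HasDerivAt (fun s => ∫ β, F s β ∂μ) (∫ β, F' t β ∂μ) t := by
  obtain ⟨M, hM⟩ := (isCompact_Icc.prod hK).exists_bound_of_continuousOn hF'
  refine (hasDerivAt_integral_of_dominated_loc_of_deriv_le (bound := fun _ => M)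
    (Ioo_mem_nhds ht.1 ht.2) ?_ ?_ ?_ ?_ (integrable_const M) ?_).2
  · filter_upwards [Ioo_mem_nhds ht.1 ht.2] with s hs
    exact ((hF s (Ioo_subset_Icc_self hs)).integrable_of_ae_mem hK hμK).aestronglyMeasurable
  · exact (hF t (Ioo_subset_Icc_self ht)).integrable_of_ae_mem hK hμK
  · exact Integrable.aestronglyMeasurable <|
      (hF'.uncurry_left t (Ioo_subset_Icc_self ht)).integrable_of_ae_mem hK hμK
  · filter_upwards [hμK] with β hβ s hs
    exact hM (s, β) ⟨Ioo_subset_Icc_self hs, hβ⟩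
  · filter_upwards [hμK] with β hβ s hs
    exact (hderiv β hβ s (Ioo_subset_Icc_self hs)).hasDerivAt (Icc_mem_nhds hs.1 hs.2)

end ParametricIntegral

theorem Matrix.integral_mulVec {α m n : Type*} [MeasurableSpace α] {μ : Measure α} [Fintype m]
    [Fintype n] (A : Matrix m n ℝ) {f : α → n → ℝ} (hf : Integrable f μ) :
    ∫ a, A *ᵥ f a ∂μ = A *ᵥ ∫ a, f a ∂μ :=
  (LinearMap.toContinuousLinearMap A.mulVecLin).integral_comp_comm hf

theorem integral_mul_normLegendre_smul {E : Type*} [NormedAddCommGroup E] [NormedSpace ℝ E]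
    {μ : Measure ℝ} {y : ℝ → E} (k : ℕ)
    (h₁ : Integrable (fun β => normLegendre (k + 1) β • y β) μ)
    (h₂ : Integrable (fun β => normLegendre (k - 1) β • y β) μ) :
    ∫ β, (β * normLegendre k β) • y β ∂μ =
      aCoef k • ∫ β, normLegendre (k + 1) β • y β ∂μ
        + cCoef k • ∫ β, normLegendre (k - 1) β • y β ∂μ := by
  simp_rw [mul_normLegendre, add_smul, mul_smul]
  rw [integral_add (h₁.fun_smul (aCoef k)) (h₂.fun_smul (cCoef k)), integral_smul,
    integral_smul]

section Moments

variable (z : ℝ → ℝ → Fin 4 → ℝ) (t : ℝ)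

theorem moment_natCast (k : ℕ) :
    moment z k t = ∫ β, normLegendre k β • z t β ∂unifMeasure := by
  simp [moment]

theorem moment_natCast_add_one (k : ℕ) :
    moment z ((k : ℤ) + 1) t = ∫ β, normLegendre (k + 1) β • z t β ∂unifMeasure := by
  exact_mod_cast moment_natCast z t (k + 1)

theorem cCoef_smul_moment_natCast_sub_one (k : ℕ) :
    cCoef k • moment z ((k : ℤ) - 1) t =
      cCoef k • ∫ β, normLegendre (k - 1) β • z t β ∂unifMeasure := by
  cases k with
  | zero => simp [cCoef]
  | succ k => simp [moment_natCast]

end Moments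

theorem moment_dynamics_general (T : ℝ) (v ω : ℝ → ℝ)
    (z zt : ℝ → ℝ → Fin 4 → ℝ)
    (hzc : ContinuousOn (fun p : ℝ × ℝ => z p.1 p.2) (Set.Icc 0 T ×ˢ Set.Icc (-1) 1))
    (hztc : ContinuousOn (fun p : ℝ × ℝ => zt p.1 p.2) (Set.Icc 0 T ×ˢ Set.Icc (-1) 1))
    (hderiv : ∀ β ∈ Set.Icc (-1 : ℝ) 1, ∀ t ∈ Set.Icc 0 T,
      HasDerivWithinAt (fun s => z s β) (zt t β) (Set.Icc 0 T) t)
    (hdyn : ∀ t ∈ Set.Icc 0 T, ∀ β ∈ Set.Icc (-1 : ℝ) 1,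
      zt t β = β • (v t • B1 + ω t • B2).mulVec (z t β)) :
    ∀ k : ℕ, ∀ t ∈ Set.Ioo 0 T,
      HasDerivAt (fun s => moment z (k : ℤ) s)
        ((v t • B1 + ω t • B2).mulVec
          (aCoef k • moment z ((k : ℤ) + 1) t + cCoef k • moment z ((k : ℤ) - 1) t)) t := by
  intro k t ht
  have htT : t ∈ Icc 0 T := Ioo_subset_Icc_self ht
  have hz : ∀ s ∈ Icc 0 T, ContinuousOn (z s) (Icc (-1) 1) :=
    fun s hs => hzc.uncurry_left (f := z) s hs
  have hint (g : ℝ → ℝ) (hg : Continuous g) :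
      Integrable (fun β => g β • z t β) unifMeasure :=
    (hg.continuousOn.smul (hz t htT)).integrable_of_ae_mem isCompact_Icc ae_mem_Icc_unifMeasure
  have hmoment := hasDerivAt_integral_of_continuousOn (μ := unifMeasure)
    (F := fun s β => normLegendre k β • z s β) (F' := fun s β => normLegendre k β • zt s β)
    isCompact_Icc ae_mem_Icc_unifMeasure ht
    (fun s hs => (continuous_normLegendre k).continuousOn.smul (hz s hs))
    (((continuous_normLegendre k).comp continuous_snd).continuousOn.smul hztc)
    (fun β hβ s hs => (hderiv β hβ s hs).fun_const_smul _)
  simp only [moment_natCast]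
  refine hmoment.congr_deriv ?_
  set A := v t • B1 + ω t • B2
  calc ∫ β, normLegendre k β • zt t β ∂unifMeasure
      = ∫ β, A *ᵥ ((β * normLegendre k β) • z t β) ∂unifMeasure := by
        refine integral_congr_ae ?_
        filter_upwards [ae_mem_Icc_unifMeasure] with β hβ
        rw [hdyn t htT β hβ, mulVec_smul, smul_smul, mul_comm]
    _ = A *ᵥ ∫ β, (β * normLegendre k β) • z t β ∂unifMeasure :=
        A.integral_mulVec (hint _ (continuous_id.mul (continuous_normLegendre k)))
    _ = A *ᵥ (aCoef k • moment z ((k : ℤ) + 1) t + cCoef k • moment z ((k : ℤ) - 1) t) := by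
        rw [integral_mul_normLegendre_smul k (hint _ (continuous_normLegendre _))
          (hint _ (continuous_normLegendre _)), moment_natCast_add_one,
          cCoef_smul_moment_natCast_sub_one]

/-- For a continuous ensemble `z(t, β)` on `[0, T] × [−1, 1]`, with continuous partial
derivative `∂z/∂t` satisfying the bilinear ensemble dynamics
`∂z/∂t(t, β) = β (v(t) B₁ + ω(t) B₂) z(t, β)`, each moment `m_k` is differentiable on
`(0, T)` with `d/dt m_k(t) = (v(t) B₁ + ω(t) B₂)(a_k m_{k+1}(t) + c_k m_{k−1}(t))`. -/
theorem moment_dynamics (T : ℝ) (hT : 0 < T) (v ω : ℝ → ℝ)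
    (hv : ContinuousOn v (Set.Icc 0 T)) (hω : ContinuousOn ω (Set.Icc 0 T))
    (z zt : ℝ → ℝ → Fin 4 → ℝ)
    (hzc : ContinuousOn (fun p : ℝ × ℝ => z p.1 p.2) (Set.Icc 0 T ×ˢ Set.Icc (-1) 1))
    (hztc : ContinuousOn (fun p : ℝ × ℝ => zt p.1 p.2) (Set.Icc 0 T ×ˢ Set.Icc (-1) 1))
    (hderiv : ∀ β ∈ Set.Icc (-1 : ℝ) 1, ∀ t ∈ Set.Icc 0 T,
      HasDerivWithinAt (fun s => z s β) (zt t β) (Set.Icc 0 T) t)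
    (hdyn : ∀ t ∈ Set.Icc 0 T, ∀ β ∈ Set.Icc (-1 : ℝ) 1,
      zt t β = β • (v t • B1 + ω t • B2).mulVec (z t β)) :
    ∀ k : ℕ, ∀ t ∈ Set.Ioo 0 T,
      HasDerivAt (fun s => moment z (k : ℤ) s)
        ((v t • B1 + ω t • B2).mulVec
          (aCoef k • moment z ((k : ℤ) + 1) t + cCoef k • moment z ((k : ℤ) - 1) t)) t :=
  moment_dynamics_general T v ω z zt hzc hztc hderiv hdyn
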